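/- Let A be an m×n real matrix with columns F₁, …, Fₙ, let S = {1, …, t} with 2 ≤ t ≤ n, and suppose c₁, …, c_t are nonzero reals with Σ_{i=1}^{t} c_i F_i = 0. Assume (1) every proper subset of {F₁, …, F_t} is linearly independent, and (2) the span of {F₁, …, F_t} intersects the span of the remaining columns {F_i : i > t} only in the zero vector. Then for any two vectors x̃, ỹ ∈ ℝⁿ with A x̃ = A ỹ, the vector (x̃₁ − ỹ₁, …, x̃_t − ỹ_t) ∈ ℝᵗ is a scalar multiple of (c₁, …, c_t). -/

import Mathlib

open Matrix

noncomputable def enorm {k : ℕ} (x : Fin k → ℝ) : ℝ :=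
  ‖(EuclideanSpace.equiv (Fin k) ℝ).symm x‖

/-- A circuit carries, up to scaling, only one linear relation: `e - (e i₀ / c i₀) • c` is a
relation vanishing at `i₀`, hence a relation among the independent family `v` off `i₀`. -/
theorem exists_eq_smul_of_sum_smul_eq_zero_of_circuit {K M ι : Type*} [Field K]
    [AddCommGroup M] [Module K M] [Fintype ι] {v : ι → M} {c e : ι → K}
    (hc : ∀ i, c i ≠ 0) (hrel : ∑ i, c i • v i = 0)
    (hproper : ∀ s : Finset ι, s ≠ Finset.univ → LinearIndependent K (fun i : s => v i))
    (he : ∑ i, e i • v i = 0) : ∃ a : K, e = a • c := by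
  classical
  rcases isEmpty_or_nonempty ι with _ | ⟨⟨i₀⟩⟩
  · exact ⟨0, Subsingleton.elim _ _⟩
  set a := e i₀ / c i₀
  set r := e - a • c
  have hr : ∑ i, r i • v i = 0 := by
    simp only [r, Pi.sub_apply, Pi.smul_apply, smul_eq_mul, sub_smul, mul_smul,
      Finset.sum_sub_distrib, ← Finset.smul_sum, he, hrel, smul_zero, sub_zero]
  have hr₀ : r i₀ = 0 := by simp [r, a, div_mul_cancel₀ _ (hc i₀)]
  have hr_erase : ∑ i : (Finset.univ.erase i₀ : Finset ι), r i • v i = 0 := by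
    rw [Finset.sum_coe_sort _ fun i => r i • v i, Finset.sum_erase _ (by simp [hr₀]), hr]
  have hli := hproper _ (Finset.erase_ne_self.2 (Finset.mem_univ i₀))
  refine ⟨a, sub_eq_zero.1 (funext fun i => ?_)⟩
  by_cases hi : i = i₀
  · exact hi ▸ hr₀
  · exact Fintype.linearIndependent_iff.1 hli (fun j => r j) hr_erase
      ⟨i, Finset.mem_erase.2 ⟨hi, Finset.mem_univ i⟩⟩

theorem Submodule.sum_smul_comp_eq_zero_of_disjoint {R M ι κ : Type*} [Ring R]
    [AddCommGroup M] [Module R M] [Fintype ι] [Fintype κ] {w : κ → M} (f : ι ↪ κ)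
    {T : Set κ} (hT : ∀ j, j ∉ Set.range f → j ∈ T)
    (hdisj : Disjoint (span R (Set.range (w ∘ f))) (span R (w '' T)))
    {d : κ → R} (h : ∑ j, d j • w j = 0) : ∑ i, d (f i) • w (f i) = 0 := by
  classical
  have hsplit : ∑ j ∈ (Finset.univ.map f)ᶜ, d j • w j + ∑ i, d (f i) • w (f i) = 0 := by
    rw [← Finset.sum_map Finset.univ f (fun j => d j • w j), Finset.sum_compl_add_sum, h]
  refine Submodule.disjoint_def.1 hdisj _
    (sum_mem fun i _ => smul_mem _ _ (subset_span ⟨i, rfl⟩)) ?_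
  rw [← neg_eq_of_add_eq_zero_right hsplit]
  refine neg_mem (sum_mem fun j hj => smul_mem _ _ (subset_span ⟨j, hT j ?_, rfl⟩))
  simpa using hj

theorem Matrix.sum_smul_transpose_eq_zero_of_mulVec_eq {R m n : Type*} [CommRing R]
    [Fintype n] {A : Matrix m n R} {x y : n → R} (h : A *ᵥ x = A *ᵥ y) :
    ∑ j, (x - y) j • Aᵀ j = 0 := by
  have h0 : A *ᵥ (x - y) = 0 := by rw [mulVec_sub, h, sub_self]
  simpa only [mulVec_eq_sum, op_smul_eq_smul] using h0

theorem stmt_15_general (m n t : ℕ) (htn : t ≤ n)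
    (A : Matrix (Fin m) (Fin n) ℝ) (c : Fin t → ℝ) (hc : ∀ i : Fin t, c i ≠ 0)
    (hrel : ∑ i : Fin t, c i • Aᵀ (Fin.castLE htn i) = 0)
    (hproper : ∀ s : Finset (Fin t), s ≠ Finset.univ →
      LinearIndependent ℝ (fun i : {x : Fin t // x ∈ s} => Aᵀ (Fin.castLE htn i)))
    (hind : Submodule.span ℝ ((fun i : Fin t => Aᵀ (Fin.castLE htn i)) '' Set.univ) ⊓
        Submodule.span ℝ ((fun j : Fin n => Aᵀ j) '' {j | t ≤ (j : ℕ)}) = ⊥) :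
    ∀ xt yt : Fin n → ℝ, A.mulVec xt = A.mulVec yt →
      ∃ a : ℝ, ∀ i : Fin t,
        xt (Fin.castLE htn i) - yt (Fin.castLE htn i) = a * c i := by
  intro xt yt hxy
  have hT : ∀ j, j ∉ Set.range (Fin.castLEEmb htn) → j ∈ {j : Fin n | t ≤ (j : ℕ)} :=
    fun j hj => not_lt.1 fun hjt => hj ⟨⟨j, hjt⟩, rfl⟩
  have hdisj := disjoint_iff.2 (Set.image_univ ▸ hind)
  have hfirst := Submodule.sum_smul_comp_eq_zero_of_disjoint (Fin.castLEEmb htn) hT hdisj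
    (Matrix.sum_smul_transpose_eq_zero_of_mulVec_eq hxy)
  obtain ⟨a, ha⟩ := exists_eq_smul_of_sum_smul_eq_zero_of_circuit hc hrel hproper hfirst
  exact ⟨a, fun i => congrFun ha i⟩

/-- Dependence among the first t columns is recovered from any two solutions of Axt = Ayt. -/
theorem stmt_15 (m n t : ℕ) (ht2 : 2 ≤ t) (htn : t ≤ n)
    (A : Matrix (Fin m) (Fin n) ℝ) (c : Fin t → ℝ) (hc : ∀ i : Fin t, c i ≠ 0)
    (hrel : ∑ i : Fin t, c i • Aᵀ (Fin.castLE htn i) = 0)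
    (hproper : ∀ s : Finset (Fin t), s ≠ Finset.univ →
      LinearIndependent ℝ (fun i : {x : Fin t // x ∈ s} => Aᵀ (Fin.castLE htn i)))
    (hind : Submodule.span ℝ ((fun i : Fin t => Aᵀ (Fin.castLE htn i)) '' Set.univ) ⊓
        Submodule.span ℝ ((fun j : Fin n => Aᵀ j) '' {j | t ≤ (j : ℕ)}) = ⊥) :
    ∀ xt yt : Fin n → ℝ, A.mulVec xt = A.mulVec yt →
      ∃ a : ℝ, ∀ i : Fin t,
        xt (Fin.castLE htn i) - yt (Fin.castLE htn i) = a * c i :=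
  stmt_15_general m n t htn A c hc hrel hproper hind
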